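/- Width lower bound for cost-SPR: let Γ be a MaxSAT instance encoded with blocking variables with cost(Γ) = k whose set A of optimal total assignments satisfies: (1) every two distinct assignments in A have Hamming distance at least d, and (2) for every blocking variable b there exist α, β ∈ A with α(b)=0 and β(b)=1. Then every cost-SPR derivation from Γ that contains a unit clause b for some blocking variable b must contain a clause of width at least d (since any clause C derived by the cost-SPR rule with witness σ satisfies |C| ≥ flip(C,σ)). -/

import Mathlib

namespace PaperMaxSAT

/-- Variables are natural numbers. -/
abbrev Var := ℕ

/-- A literal is a variable together with a polarity. -/
abbrev Lit := Var × Bool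

/-- Negation of a literal. -/
def negLit (l : Lit) : Lit := (l.1, !l.2)

/-- A clause is a finite set of literals. -/
abbrev Clause := Finset Lit

/-- A CNF formula is a finite multiset of clauses. -/
abbrev CNF := Multiset Clause

/-- A tautological clause contains a literal together with its negation. -/
def isTaut (C : Clause) : Prop := ∃ l ∈ C, negLit l ∈ C

/-- The value of a substitution at a variable: a Boolean constant or a literal. -/
abbrev SubVal := Bool ⊕ Lit

/-- Negation on substitution values. -/
def negSV : SubVal → SubVal
  | .inl b => .inl !b
  | .inr l => .inr (negLit l)

/-- A substitution maps each variable to `0`, `1` or a literal. -/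
abbrev Sub := Var → SubVal

/-- Applying a substitution to a literal, respecting `σ(¬x) = ¬σ(x)`. -/
def appLit (σ : Sub) (l : Lit) : SubVal :=
  if l.2 then σ l.1 else negSV (σ l.1)

/-- The identity substitution. -/
def idSub : Sub := fun v => .inr (v, true)

/-- `σ(C) = 1` : some literal of `C` is mapped to true by `σ`. -/
def clauseTrue (σ : Sub) (C : Clause) : Prop := ∃ l ∈ C, appLit σ l = Sum.inl true

instance (σ : Sub) (C : Clause) : Decidable (clauseTrue σ C) := by
  unfold clauseTrue; infer_instance

/-- `C↾σ` : the clause whose literals are the images under `σ` of the literals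
of `C` mapped to literals (literals mapped to `0` are dropped). -/
def restrictClause (σ : Sub) (C : Clause) : Clause :=
  C.biUnion (fun l => match appLit σ l with
    | .inr m => {m}
    | _ => (∅ : Clause))

/-- `Γ↾σ` : restrict every clause of `Γ`; clauses mapped to `1` are removed. -/
def restrictCNF (σ : Sub) (Γ : CNF) : CNF :=
  (Γ.filter (fun C => ¬ clauseTrue σ C)).map (restrictClause σ)

/-- `σ ⊨ C` : `σ(C) = 1` or `σ(C)` is tautological. -/
def subSat (σ : Sub) (C : Clause) : Prop :=
  clauseTrue σ C ∨ isTaut (restrictClause σ C)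

/-- The assignment `¬C`, setting all literals of `C` to false. -/
def negSub (C : Clause) : Sub := fun v =>
  if (v, true) ∈ C then .inl false
  else if (v, false) ∈ C then .inl true
  else .inr (v, true)

/-- The substitution setting the literal `l` to true and touching nothing else. -/
def litSub (l : Lit) : Sub := fun v => if v = l.1 then .inl l.2 else .inr (v, true)

/-- Unit propagation derives the empty clause. -/
inductive UPFalse : CNF → Prop
  | empty {Γ : CNF} : (∅ : Clause) ∈ Γ → UPFalse Γ
  | step {Γ : CNF} (l : Lit) : ({l} : Clause) ∈ Γ →
      UPFalse (restrictCNF (litSub l) Γ) → UPFalse Γ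

/-- The unit clauses `¬l` for `l ∈ C`. -/
def negUnits (C : Clause) : CNF := C.val.map (fun l => ({negLit l} : Clause))

/-- `Γ ⊢₁ C` : unit propagation on `Γ↾¬C` produces the empty clause. -/
def UPimplies (Γ : CNF) (C : Clause) : Prop := UPFalse (Γ + negUnits C)

/-- `Γ ⊢₁ Δ` : `Γ ⊢₁ D` for every `D ∈ Δ`. -/
def UPimpliesAll (Γ Δ : CNF) : Prop := ∀ D ∈ Δ, UPimplies Γ D

/-- Total assignments. -/
abbrev TAssign := Var → Bool

/-- A total assignment satisfies a clause. -/
def satC (α : TAssign) (C : Clause) : Prop := ∃ l ∈ C, α l.1 = l.2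

instance (α : TAssign) (C : Clause) : Decidable (satC α C) := by
  unfold satC; infer_instance

/-- A total assignment satisfies a CNF. -/
def satCNF (α : TAssign) (Γ : CNF) : Prop := ∀ C ∈ Γ, satC α C

/-- `τ ∘ σ` : composition of a total assignment with a substitution. -/
def comp (τ : TAssign) (σ : Sub) : TAssign := fun v =>
  match σ v with
  | .inl b => b
  | .inr l => if l.2 then τ l.1 else !(τ l.1)

/-- `τ` extends the assignment `¬C`. -/
def extendsNeg (τ : TAssign) (C : Clause) : Prop := ∀ l ∈ C, τ l.1 = !l.2

/-- The cost of a total assignment w.r.t. a set `B` of blocking variables: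
the number of blocking variables set to true. -/
def cost (B : Finset Var) (α : TAssign) : ℕ := (B.filter (fun b => α b = true)).card

/-- The cost of a MaxSAT instance encoded with blocking variables `B`:
the minimum cost of a satisfying total assignment. -/
noncomputable def costCNF (B : Finset Var) (Γ : CNF) : ℕ :=
  sInf {k | ∃ α : TAssign, satCNF α Γ ∧ cost B α = k}

/-- `σ` witnesses that `C` is cost-SR w.r.t. `Γ` (with blocking variables `B`):
the redundancy condition `Γ↾¬C ⊢₁ (Γ ∪ {C})↾σ` and the cost condition. -/
def CostSRwit (B : Finset Var) (Γ : CNF) (C : Clause) (σ : Sub) : Prop :=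
  UPimpliesAll (restrictCNF (negSub C) Γ) (restrictCNF σ (C ::ₘ Γ)) ∧
  ∀ τ : TAssign, extendsNeg τ C → cost B (comp τ σ) ≤ cost B τ

/-- `C` is cost-SR w.r.t. `Γ`. -/
def CostSR (B : Finset Var) (Γ : CNF) (C : Clause) : Prop := ∃ σ, CostSRwit B Γ C σ

/-- A substitution which is an assignment: every value is `0`, `1`,
or the variable itself. -/
def isAssign (σ : Sub) : Prop :=
  ∀ v, σ v = .inl true ∨ σ v = .inl false ∨ σ v = .inr (v, true)

/-- The variables of a clause. -/
def varsClause (C : Clause) : Finset Var := C.image Prod.fst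

/-- The variables of a CNF. -/
def varsCNF (Γ : CNF) : Finset Var := (Γ.map varsClause).sup

/-- Membership in the domain of an assignment. -/
def subDom (σ : Sub) (v : Var) : Prop := ∃ b : Bool, σ v = .inl b

/-- `C` is cost-PR w.r.t. `Γ`: cost-SR witnessed by an assignment. -/
def CostPR (B : Finset Var) (Γ : CNF) (C : Clause) : Prop :=
  ∃ σ, CostSRwit B Γ C σ ∧ isAssign σ

/-- `C` is cost-SPR w.r.t. `Γ`: cost-SR witnessed by an assignment with
domain `dom(¬C) = Var(C)`. -/
def CostSPR (B : Finset Var) (Γ : CNF) (C : Clause) : Prop :=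
  ∃ σ, CostSRwit B Γ C σ ∧ isAssign σ ∧ (∀ v, subDom σ v ↔ v ∈ varsClause C)

/-- `C` is cost-LPR w.r.t. `Γ`: cost-SR witnessed by an assignment with
domain `dom(¬C)` differing from `¬C` on exactly one variable. -/
def CostLPR (B : Finset Var) (Γ : CNF) (C : Clause) : Prop :=
  ∃ σ, CostSRwit B Γ C σ ∧ isAssign σ ∧ (∀ v, subDom σ v ↔ v ∈ varsClause C) ∧
    ((varsClause C).filter (fun v => σ v ≠ negSub C v)).card = 1

/-- `D` is a resolvent of `E₁` and `E₂`. -/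
def resolvent (D E₁ E₂ : Clause) : Prop :=
  ∃ x : Var, (x, true) ∈ E₁ ∧ (x, false) ∈ E₂ ∧
    D = E₁.erase (x, true) ∪ E₂.erase (x, false)

/-- A derivation from `Γ` in the calculus with redundancy rule `Red`:
every clause of the list is in `Γ`, a weakening of an earlier clause,
a resolvent of two earlier clauses, or redundant (w.r.t. `Red`) relative to
`Γ` together with the earlier clauses, using no new variables. -/
def IsDeriv (Red : Finset Var → CNF → Clause → Prop) (B : Finset Var) (Γ : CNF)
    (L : List Clause) : Prop :=
  ∀ i, ∀ hi : i < L.length,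
    L[i] ∈ Γ ∨
    (∃ j, ∃ hj : j < i, L[j]'(hj.trans hi) ⊆ L[i]) ∨
    (∃ j k, ∃ hj : j < i, ∃ hk : k < i,
      resolvent L[i] (L[j]'(hj.trans hi)) (L[k]'(hk.trans hi))) ∨
    (Red B (Γ + (↑(L.take i) : CNF)) L[i] ∧ varsClause L[i] ⊆ varsCNF Γ)

/-- `C ∨ ℓ` is a cost blocked clause (cost-BC) w.r.t. `Γ` and `ℓ`. -/
def CostBC (B : Finset Var) (Γ : CNF) (C : Clause) (l : Lit) : Prop :=
  (∀ D ∈ Γ, negLit l ∈ D → isTaut (C ∪ D.erase (negLit l))) ∧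
  ¬(l.2 = true ∧ l.1 ∈ B)

/-- Hamming distance between two total assignments, over the variables in `V`. -/
def HD (V : Finset Var) (α β : TAssign) : ℕ := (V.filter (fun v => α v ≠ β v)).card

/-- `flip(C, σ) ≥ d` : some total assignment `τ` extending `¬C` has
Hamming distance (over `V`) at least `d` from `τ ∘ σ`. -/
def flipGE (V : Finset Var) (C : Clause) (σ : Sub) (d : ℕ) : Prop :=
  ∃ τ : TAssign, extendsNeg τ C ∧ d ≤ HD V τ (comp τ σ)


lemma comp_lit (α : TAssign) (σ : Sub) (l : Lit) :
    comp α σ l.1 = l.2 ↔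
      (appLit σ l = Sum.inl true ∨ ∃ m : Lit, appLit σ l = Sum.inr m ∧ α m.1 = m.2) := by
  rcases l with ⟨v, p⟩
  simp only [appLit, comp]
  rcases h : σ v with b | ⟨w, q⟩
  · cases p <;> cases b <;> simp [negSV]
  · cases p <;> cases q <;> simp [negSV, negLit] <;> (try (cases hw : α w <;> simp))

lemma mem_restrictClause {σ : Sub} {C : Clause} {m : Lit} :
    m ∈ restrictClause σ C ↔ ∃ l ∈ C, appLit σ l = Sum.inr m := by
  simp only [restrictClause, Finset.mem_biUnion]
  constructor
  · rintro ⟨l, hl, hm⟩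
    refine ⟨l, hl, ?_⟩
    rcases h : appLit σ l with b | m' <;> simp [h] at hm
    subst hm; rfl
  · rintro ⟨l, hl, h⟩
    exact ⟨l, hl, by simp [h]⟩

lemma satC_comp {α : TAssign} {σ : Sub} {D : Clause} :
    satC (comp α σ) D ↔ clauseTrue σ D ∨ satC α (restrictClause σ D) := by
  constructor
  · rintro ⟨l, hl, he⟩
    rcases (comp_lit α σ l).mp he with h | ⟨m, hm, ham⟩
    · exact Or.inl ⟨l, hl, h⟩
    · exact Or.inr ⟨m, mem_restrictClause.mpr ⟨l, hl, hm⟩, ham⟩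
  · rintro (⟨l, hl, h⟩ | ⟨m, hm, ham⟩)
    · exact ⟨l, hl, (comp_lit α σ l).mpr (Or.inl h)⟩
    · obtain ⟨l, hl, hm⟩ := mem_restrictClause.mp hm
      exact ⟨l, hl, (comp_lit α σ l).mpr (Or.inr ⟨m, hm, ham⟩)⟩

lemma satCNF_restrict {α : TAssign} {σ : Sub} {Δ : CNF} :
    satCNF α (restrictCNF σ Δ) ↔ satCNF (comp α σ) Δ := by
  constructor
  · intro h D hD
    by_cases ht : clauseTrue σ D
    · exact satC_comp.mpr (Or.inl ht)
    · refine satC_comp.mpr (Or.inr ?_)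
      exact h _ (Multiset.mem_map.mpr ⟨D, Multiset.mem_filter.mpr ⟨hD, ht⟩, rfl⟩)
  · intro h E hE
    obtain ⟨D, hD, rfl⟩ := Multiset.mem_map.mp hE
    obtain ⟨hDΔ, ht⟩ := Multiset.mem_filter.mp hD
    rcases satC_comp.mp (h D hDΔ) with h' | h'
    · exact absurd h' ht
    · exact h'

lemma comp_litSub {α : TAssign} {l : Lit} (h : α l.1 = l.2) : comp α (litSub l) = α := by
  funext v
  simp only [comp, litSub]
  by_cases hv : v = l.1 <;> simp [hv]
  subst hv; cases hl2 : l.2 <;> simp [hl2] at h <;> simp [h]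

lemma comp_negSub {α : TAssign} {C : Clause} (h : extendsNeg α C) :
    comp α (negSub C) = α := by
  funext v
  simp only [comp, negSub]
  by_cases h1 : (v, true) ∈ C
  · simp [h1, h _ h1]
  · by_cases h2 : (v, false) ∈ C
    · simpa [h1, h2] using (h _ h2).symm
    · simp [h1, h2]

lemma UPFalse_sound {Δ : CNF} (h : UPFalse Δ) : ∀ α : TAssign, ¬ satCNF α Δ := by
  induction h with
  | empty hmem => intro α hα; obtain ⟨l, hl, _⟩ := hα _ hmem; simp at hl
  | step l hmem _ IH =>
    intro α hα
    obtain ⟨m, hm, he⟩ := hα _ hmem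
    rw [Finset.mem_singleton] at hm; subst hm
    refine IH α ?_
    rw [satCNF_restrict, comp_litSub he]
    exact hα

lemma UPimplies_sound {Δ : CNF} {C : Clause} (h : UPimplies Δ C) {α : TAssign}
    (hα : satCNF α Δ) : satC α C := by
  by_contra hC
  refine UPFalse_sound h α ?_
  intro D hD
  rcases Multiset.mem_add.mp hD with h' | h'
  · exact hα _ h'
  · obtain ⟨l, hl, rfl⟩ := Multiset.mem_map.mp h'
    refine ⟨negLit l, Finset.mem_singleton_self _, ?_⟩
    have : α l.1 ≠ l.2 := fun he => hC ⟨l, hl, he⟩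
    simp only [negLit]
    cases h2 : l.2 <;> simp [h2] at this <;> simp [this]

lemma negUnits_mem {C : Clause} {D : Clause} :
    D ∈ negUnits C ↔ ∃ l ∈ C, D = {negLit l} := by
  simp [negUnits, eq_comm]


/-- width lower bound for cost-SPR: if the set `A` of optimal
total assignments of `Γ` has pairwise Hamming distance at least `d` and no
blocking variable is constant on `A`, then every cost-SPR derivation from `Γ`
containing a unit clause `b` for some blocking variable must contain a clause
of width at least `d`. -/
theorem costSPR_width_lower_bound (B : Finset Var) (Γ : CNF) (k d : ℕ)
    (hcost : costCNF B Γ = k)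
    (hdist : ∀ α β : TAssign, satCNF α Γ → cost B α = k →
      satCNF β Γ → cost B β = k →
      (∃ v ∈ varsCNF Γ ∪ B, α v ≠ β v) → d ≤ HD (varsCNF Γ ∪ B) α β)
    (hboth : ∀ b ∈ B,
      (∃ α : TAssign, satCNF α Γ ∧ cost B α = k ∧ α b = false) ∧
      (∃ β : TAssign, satCNF β Γ ∧ cost B β = k ∧ β b = true)) :
    ∀ L : List Clause, IsDeriv CostSPR B Γ L →
      (∃ b ∈ B, ({(b, true)} : Clause) ∈ L) →
      ∃ i, ∃ hi : i < L.length, d ≤ (L[i]'hi).card := by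
  intro L hderiv hex
  obtain ⟨b, hbB, hbL⟩ := hex
  by_contra hcon
  push_neg at hcon
  -- main invariant: every optimal assignment satisfies every derived clause
  have main : ∀ i (hi : i < L.length) (α : TAssign), satCNF α Γ → cost B α = k →
      satC α (L[i]'hi) := by
    intro i
    induction i using Nat.strong_induction_on with
    | _ i IH =>
      intro hi α hsat hc
      rcases hderiv i hi with hmem | ⟨j, hj, hsub⟩ | ⟨j, j', hj, hj', hres⟩ |
        ⟨⟨σ, hwit, hassign, hdom⟩, hvars⟩
      · exact hsat _ hmem
      · obtain ⟨l, hl, he⟩ := IH j hj (hj.trans hi) α hsat hc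
        exact ⟨l, hsub hl, he⟩
      · obtain ⟨x, hx1, hx2, hD⟩ := hres
        obtain ⟨l1, hl1, he1⟩ := IH j hj (hj.trans hi) α hsat hc
        obtain ⟨l2, hl2, he2⟩ := IH j' hj' (hj'.trans hi) α hsat hc
        cases hax : α x with
        | true =>
          refine ⟨l2, ?_, he2⟩
          rw [hD]
          refine Finset.mem_union_right _ (Finset.mem_erase.mpr ⟨?_, hl2⟩)
          rintro rfl; rw [hax] at he2; simp at he2
        | false =>
          refine ⟨l1, ?_, he1⟩
          rw [hD]
          refine Finset.mem_union_left _ (Finset.mem_erase.mpr ⟨?_, hl1⟩)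
          rintro rfl; rw [hax] at he1; simp at he1
      · -- cost-SPR case
        by_contra hns
        have hext : extendsNeg α (L[i]'hi) := by
          intro l hl
          have : α l.1 ≠ l.2 := fun he => hns ⟨l, hl, he⟩
          cases h2 : l.2 <;> simp [h2] at this <;> simp [this]
        have hΓ' : satCNF α (Γ + ↑(L.take i)) := by
          intro D hD
          rcases Multiset.mem_add.mp hD with h | h
          · exact hsat D h
          · rw [Multiset.mem_coe, List.mem_iff_getElem] at h
            obtain ⟨j, hjlen, hDj⟩ := h
            have hji : j < i := lt_of_lt_of_le hjlen (by simp [List.length_take])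
            have : (L.take i)[j] = L[j]'(hji.trans hi) := List.getElem_take
            rw [this] at hDj
            rw [← hDj]
            exact IH j hji (hji.trans hi) α hsat hc
        have hres : satCNF α (restrictCNF (negSub (L[i]'hi)) (Γ + ↑(L.take i))) := by
          rw [satCNF_restrict, comp_negSub hext]; exact hΓ'
        have h2 : satCNF α (restrictCNF σ ((L[i]'hi) ::ₘ (Γ + ↑(L.take i)))) :=
          fun D hD => UPimplies_sound (hwit.1 D hD) hres
        have h3 : satCNF (comp α σ) ((L[i]'hi) ::ₘ (Γ + ↑(L.take i))) :=
          satCNF_restrict.mp h2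
        set β := comp α σ with hβ
        have hβC : satC β (L[i]'hi) := h3 _ (Multiset.mem_cons_self _ _)
        have hβΓ : satCNF β Γ :=
          fun D hD => h3 D (Multiset.mem_cons_of_mem (Multiset.mem_add.mpr (Or.inl hD)))
        have hβk : cost B β = k := by
          have hle : cost B β ≤ cost B α := hwit.2 α hext
          have hge : k ≤ cost B β := by
            rw [← hcost]
            exact Nat.sInf_le ⟨β, hβΓ, rfl⟩
          omega
        obtain ⟨l, hl, hβl⟩ := hβC
        have hαl : α l.1 = !l.2 := hext l hl
        have hne : α l.1 ≠ β l.1 := by rw [hαl, hβl]; simp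
        have hlv : l.1 ∈ varsClause (L[i]'hi) := Finset.mem_image.mpr ⟨l, hl, rfl⟩
        have hd : d ≤ HD (varsCNF Γ ∪ B) α β :=
          hdist α β hsat hc hβΓ hβk ⟨l.1, Finset.mem_union_left _ (hvars hlv), hne⟩
        have hub : HD (varsCNF Γ ∪ B) α β ≤ (L[i]'hi).card := by
          have hsubset : (varsCNF Γ ∪ B).filter (fun v => α v ≠ β v) ⊆
              varsClause (L[i]'hi) := by
            intro v hv
            rw [Finset.mem_filter] at hv
            by_contra hvn
            have hnd : ¬ subDom σ v := fun hs => hvn ((hdom v).mp hs)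
            have hσv : σ v = .inr (v, true) := by
              rcases hassign v with h | h | h
              · exact absurd ⟨true, h⟩ hnd
              · exact absurd ⟨false, h⟩ hnd
              · exact h
            exact hv.2 (by rw [hβ]; simp [comp, hσv])
          calc HD (varsCNF Γ ∪ B) α β ≤ (varsClause (L[i]'hi)).card :=
                Finset.card_le_card hsubset
            _ ≤ (L[i]'hi).card := Finset.card_image_le
        exact absurd (hd.trans hub) (Nat.not_le.mpr (hcon i hi))
  -- apply to the unit clause
  obtain ⟨i, hi, hLi⟩ := List.mem_iff_getElem.mp hbL
  obtain ⟨α, hαΓ, hαk, hαb⟩ := (hboth b hbB).1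
  have := main i hi α hαΓ hαk
  rw [hLi] at this
  obtain ⟨l, hl, he⟩ := this
  rw [Finset.mem_singleton] at hl
  subst hl
  rw [hαb] at he
  simp at he

end PaperMaxSAT
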